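/- Define Z(λ) = ∫_ℝ e^{−λx⁴/8} dν(x) for λ ∈ ℂ with Re λ ≥ 0. Then Re Z(λ) > 0 for every λ with Re λ ≥ 0; in particular Z(λ) ≠ 0 on the closed right half-plane, so that F(λ) = Log Z(λ) is well defined there using the principal logarithm. -/

import Mathlib

/-!
The Gaussian weight is a positive mixture of quartic ones: the substitution
`u = n/√2 - x²/(2√2 n)` (Cauchy–Schlömilch) gives
`∫ exp (-n²/2 - x⁴/(8n²)) dn = √(2π) exp (-x²/2)`. By Fubini,
`Z(λ) = (2π)⁻¹ ∫ exp (-n²/2) Q(λ/8 + 1/(8n²)) dn` with `Q(z) = ∫ exp (-z x⁴) dx`.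
Both `Q` and `z ↦ 2 Γ(5/4) z^(-1/4)` are holomorphic on `Re z > 0` and agree for real `z > 0`,
so they agree there; as `|arg z^(-1/4)| < π/8`, `Re Q(z) > 0`, and integrating gives `Re Z(λ) > 0`.
-/

open MeasureTheory

noncomputable def gaussianNu : Measure ℝ :=
  MeasureTheory.volume.withDensity fun σ : ℝ =>
    ENNReal.ofReal ((Real.sqrt (2 * Real.pi))⁻¹ * Real.exp (-σ ^ 2 / 2))

open Set Real Filter Topology ProbabilityTheory
open scoped Complex

theorem integral_pos_of_ae_pos {α : Type*} [MeasurableSpace α] {μ : Measure α} [NeZero μ]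
    {f : α → ℝ} (hf : Integrable f μ) (hpos : ∀ᵐ x ∂μ, 0 < f x) :
    0 < ∫ x, f x ∂μ := by
  have hsupp : Function.support f =ᵐ[μ] univ :=
    ae_eq_univ.2 (ae_iff.1 (hpos.mono fun _ hx => hx.ne'))
  rw [integral_pos_iff_support_of_nonneg_ae (hpos.mono fun _ hx => hx.le) hf, measure_congr hsupp]
  exact pos_iff_ne_zero.2 (Measure.measure_univ_ne_zero.2 (NeZero.ne μ))

theorem abs_lt_sqrt_sq_add {c : ℝ} (hc : 0 < c) (u : ℝ) : |u| < √(u ^ 2 + c) :=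
  (Real.lt_sqrt (abs_nonneg u)).2 (by rw [sq_abs]; linarith)

section CauchySchlomilch

variable {a b : ℝ}

theorem integral_Ioi_comp_mul_sub_div {E : Type*} [NormedAddCommGroup E] [NormedSpace ℝ E]
    (ha : 0 < a) (hb : 0 < b) (g : ℝ → E) :
    ∫ n in Ioi (0 : ℝ), g (a * n - b / n) =
      ∫ u, ((1 + u / √(u ^ 2 + 4 * a * b)) / (2 * a)) • g u := by
  -- `ψ` inverts `n ↦ a * n - b / n`, a bijection from `(0, ∞)` onto `ℝ`.
  set s : ℝ → ℝ := fun u => √(u ^ 2 + 4 * a * b) with hs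
  set ψ : ℝ → ℝ := fun u => (u + s u) / (2 * a) with hψ
  have hs_sq (u : ℝ) : s u ^ 2 = u ^ 2 + 4 * a * b := Real.sq_sqrt (by positivity)
  have habs_lt (u : ℝ) : |u| < s u := abs_lt_sqrt_sq_add (by positivity) u
  have hs_pos (u : ℝ) : 0 < s u := (abs_nonneg u).trans_lt (habs_lt u)
  have hψ_pos (u : ℝ) : 0 < ψ u :=
    div_pos (by linarith [neg_abs_le u, habs_lt u]) (by positivity)
  have hψ_inv (u : ℝ) : a * ψ u - b / ψ u = u := by
    have hψu := (hψ_pos u).ne'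
    have key : a * ψ u ^ 2 - u * ψ u - b = 0 := by
      simp only [hψ]
      field_simp
      linear_combination hs_sq u
    field_simp
    linear_combination key
  have hψ_deriv (u : ℝ) : HasDerivAt ψ ((1 + u / s u) / (2 * a)) u := by
    have := ((hasDerivAt_pow 2 u).add_const (4 * a * b)).sqrt (by positivity)
    refine (((hasDerivAt_id' u).add this).div_const (2 * a)).congr_deriv ?_
    have := hs_pos u
    simp only [hs] at this ⊢
    field_simp
    norm_num
    ring
  have hψ_range : ψ '' univ = Ioi 0 := by
    refine Subset.antisymm (by rintro _ ⟨u, -, rfl⟩; exact hψ_pos u) fun n (hn : 0 < n) => ?_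
    refine ⟨a * n - b / n, trivial, ?_⟩
    have hsn : s (a * n - b / n) = a * n + b / n := by
      have : (a * n - b / n) ^ 2 + 4 * a * b = (a * n + b / n) ^ 2 := by
        field_simp
        ring
      simp only [hs, this]
      exact Real.sqrt_sq (by positivity)
    simp only [hψ, hsn]
    field_simp
    ring
  rw [← hψ_range, integral_image_eq_integral_abs_deriv_smul MeasurableSet.univ
    (fun u _ => (hψ_deriv u).hasDerivWithinAt)
    (Function.LeftInverse.injective (g := fun n => a * n - b / n) hψ_inv).injOn,
    Measure.restrict_univ]
  congr 1 with u
  rw [hψ_inv, abs_of_pos]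
  refine div_pos ?_ (by positivity)
  rw [← sub_neg_eq_add, sub_pos, ← neg_div, div_lt_one (hs_pos u)]
  linarith [neg_abs_le u, habs_lt u]

theorem integral_exp_neg_sq_mul_sub_div (ha : 0 < a) (hb : 0 < b) :
    ∫ n, rexp (-(a * n - b / n) ^ 2) = √π / a := by
  set s : ℝ → ℝ := fun u => √(u ^ 2 + 4 * a * b)
  have hgauss : Integrable fun u : ℝ => rexp (-u ^ 2) := by
    simpa using integrable_exp_neg_mul_sq one_pos
  have hodd_int : Integrable fun u => u / s u * rexp (-u ^ 2) := by
    refine hgauss.bdd_mul (c := 1) (measurable_id.div (by fun_prop)).aestronglyMeasurable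
      (ae_of_all _ fun u => ?_)
    rw [Real.norm_eq_abs, abs_div, abs_of_nonneg (Real.sqrt_nonneg _)]
    exact div_le_one_of_le₀ (abs_lt_sqrt_sq_add (by positivity) u).le (Real.sqrt_nonneg _)
  have hodd : ∫ u, u / s u * rexp (-u ^ 2) = 0 := by
    have := integral_neg_eq_self (fun u => u / s u * rexp (-u ^ 2)) volume
    simp only [neg_div, neg_sq, neg_mul, integral_neg, s] at this
    linarith
  calc ∫ n, rexp (-(a * n - b / n) ^ 2)
      = 2 * ∫ n in Ioi 0, rexp (-(a * n - b / n) ^ 2) := by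
        rw [← integral_comp_abs]
        congr with n
        rcases abs_choice n with h | h <;> rw [h]
        congr 2
        ring
    _ = 2 * ∫ u, ((1 + u / s u) / (2 * a)) • rexp (-u ^ 2) := by
        rw [integral_Ioi_comp_mul_sub_div ha hb fun u => rexp (-u ^ 2)]
    _ = a⁻¹ * ((∫ u, rexp (-u ^ 2)) + ∫ u, u / s u * rexp (-u ^ 2)) := by
        rw [← integral_add hgauss hodd_int, ← integral_const_mul, ← integral_const_mul]
        congr with u
        simp only [smul_eq_mul]
        field_simp
    _ = √π / a := by
        have hπ := integral_gaussian 1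
        simp only [neg_mul, one_mul, div_one] at hπ
        rw [hodd, add_zero, hπ, div_eq_inv_mul]

theorem integral_exp_neg_mul_sq_sub_div_sq (ha : 0 < a) (hb : 0 ≤ b) :
    ∫ n, rexp (-(a * n ^ 2) - b / n ^ 2) = √(π / a) * rexp (-(2 * √(a * b))) := by
  rcases hb.eq_or_lt with rfl | hb
  · simpa using integral_gaussian a
  have hexp : ∀ᵐ n : ℝ, rexp (-(a * n ^ 2) - b / n ^ 2) =
      rexp (-(2 * √(a * b))) * rexp (-(√a * n - √b / n) ^ 2) := by
    filter_upwards [Measure.ae_ne volume 0] with n hn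
    rw [← Real.exp_add, Real.sqrt_mul ha.le]
    congr 1
    field_simp
    linear_combination n ^ 4 * Real.sq_sqrt ha.le + Real.sq_sqrt hb.le
  rw [integral_congr_ae hexp, integral_const_mul, integral_exp_neg_sq_mul_sub_div
    (Real.sqrt_pos.2 ha) (Real.sqrt_pos.2 hb), Real.sqrt_div' _ ha.le, mul_comm]

end CauchySchlomilch

noncomputable def quarticMixtureKernel (x n : ℝ) : ℝ :=
  (2 * π)⁻¹ * rexp (-(n ^ 2 / 2) - x ^ 4 / (8 * n ^ 2))

theorem integral_quarticMixtureKernel (x : ℝ) :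
    ∫ n, quarticMixtureKernel x n = gaussianPDFReal 0 1 x := by
  have key :
      ∫ n, rexp (-(n ^ 2 / 2) - x ^ 4 / (8 * n ^ 2)) = √(2 * π) * rexp (-(x ^ 2 / 2)) := by
    convert integral_exp_neg_mul_sq_sub_div_sq (a := 1 / 2) (b := x ^ 4 / 8) one_half_pos
      (by positivity) using 3 with n
    · congr 1
      ring
    · ring
    · rw [show 1 / 2 * (x ^ 4 / 8) = (x ^ 2 / 4) ^ 2 by ring, Real.sqrt_sq (by positivity)]
      ring
  have hsq : √(2 * π) ^ 2 = 2 * π := Real.sq_sqrt (by positivity)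
  simp only [quarticMixtureKernel, gaussianPDFReal, integral_const_mul, key, NNReal.coe_one,
    mul_one, sub_zero, neg_div]
  field_simp
  rw [hsq]

section Mixture

variable {E : Type*} [NormedAddCommGroup E] [NormedSpace ℝ E] {f : ℝ → E}

theorem integrable_quarticMixtureKernel_smul (hf : Integrable f (gaussianReal 0 1)) :
    Integrable (Function.uncurry fun x n => quarticMixtureKernel x n • f x)
      (volume.prod volume) := by
  have hf_meas : AEStronglyMeasurable f volume :=
    hf.1.mono_ac (gaussianReal_absolutelyContinuous' 0 one_ne_zero)
  have hf_pdf : Integrable fun x => gaussianPDFReal 0 1 x • f x := by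
    rw [gaussianReal_of_var_ne_zero 0 one_ne_zero, integrable_withDensity_iff_integrable_smul'
      (measurable_gaussianPDF 0 1) (ae_of_all _ fun _ => gaussianPDF_lt_top)] at hf
    simpa only [toReal_gaussianPDF] using hf
  have hk_meas : Measurable (Function.uncurry quarticMixtureKernel) := by
    unfold quarticMixtureKernel
    fun_prop
  have hk_int (x : ℝ) : Integrable (quarticMixtureKernel x) :=
    .of_integral_ne_zero <| by
      rw [integral_quarticMixtureKernel]; exact (gaussianPDFReal_pos 0 1 x one_ne_zero).ne'
  have hk_nonneg (x n : ℝ) : 0 ≤ quarticMixtureKernel x n := by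
    unfold quarticMixtureKernel
    positivity
  refine (integrable_prod_iff ?_).2 ⟨ae_of_all _ fun x => ?_, ?_⟩
  · exact hk_meas.aestronglyMeasurable.smul hf_meas.comp_fst
  · exact (hk_int x).smul_const (f x)
  · refine hf_pdf.norm.congr (ae_of_all _ fun x => ?_)
    simp only [Function.uncurry_apply_pair, norm_smul, Real.norm_of_nonneg (hk_nonneg _ _),
      integral_mul_const, integral_quarticMixtureKernel,
      Real.norm_of_nonneg (gaussianPDFReal_nonneg 0 1 x)]

theorem integral_gaussianReal_eq_integral_integral_quarticMixtureKernel_smul [CompleteSpace E]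
    (hf : Integrable f (gaussianReal 0 1)) :
    ∫ x, f x ∂gaussianReal 0 1 = ∫ n, ∫ x, quarticMixtureKernel x n • f x := by
  rw [integral_gaussianReal_eq_integral_smul one_ne_zero,
    ← integral_integral_swap (integrable_quarticMixtureKernel_smul hf)]
  simp only [integral_smul_const, integral_quarticMixtureKernel]

end Mixture

theorem exp_neg_mul_pow_four_le {c : ℝ} (hc : 0 ≤ c) (x : ℝ) :
    rexp (-c * x ^ 4) ≤ rexp c * rexp (-c * x ^ 2) := by
  rw [← Real.exp_add, Real.exp_le_exp]
  nlinarith [mul_nonneg hc (add_nonneg (sq_nonneg (x ^ 2 - 1)) (sq_nonneg x))]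

theorem integrable_pow_mul_exp_neg_mul_pow_four (k : ℕ) {c : ℝ} (hc : 0 < c) :
    Integrable fun x : ℝ => x ^ k * rexp (-c * x ^ 4) := by
  have hgauss := ((integrable_rpow_mul_exp_neg_mul_sq hc (s := k)
    (by linarith [k.cast_nonneg (α := ℝ)])).norm.const_mul (rexp c))
  refine hgauss.mono' (by fun_prop) (ae_of_all _ fun x => ?_)
  simp only [norm_mul, Real.rpow_natCast, Real.norm_of_nonneg (Real.exp_pos _).le]
  rw [mul_left_comm]
  exact mul_le_mul_of_nonneg_left (exp_neg_mul_pow_four_le hc.le x) (norm_nonneg _)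

theorem norm_cexp_neg_mul_pow_four (z : ℂ) (x : ℝ) :
    ‖cexp (-z * x ^ 4)‖ = rexp (-z.re * x ^ 4) := by
  rw [Complex.norm_exp, ← Complex.ofReal_pow, Complex.re_mul_ofReal, Complex.neg_re]

theorem integrable_cexp_neg_mul_pow_four {z : ℂ} (hz : 0 < z.re) :
    Integrable fun x : ℝ => cexp (-z * x ^ 4) := by
  refine Integrable.mono' (by simpa using integrable_pow_mul_exp_neg_mul_pow_four 0 hz)
    (by fun_prop) (ae_of_all _ fun x => (norm_cexp_neg_mul_pow_four z x).le)

theorem integral_exp_neg_mul_pow_four {b : ℝ} (hb : 0 < b) :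
    ∫ x, rexp (-b * x ^ 4) = 2 * Real.Gamma (5 / 4) * b ^ (-1 / 4 : ℝ) := by
  have h := integral_comp_abs (f := fun x => rexp (-b * x ^ 4))
  simp only [(by decide : Even 4).pow_abs] at h
  have hIoi := integral_exp_neg_mul_rpow (p := 4) (by norm_num) hb
  simp only [Real.rpow_ofNat] at hIoi
  rw [h, hIoi]
  norm_num
  ring

theorem differentiableOn_integral_cexp_neg_mul_pow_four :
    DifferentiableOn ℂ (fun z : ℂ => ∫ x : ℝ, cexp (-z * x ^ 4)) {z | 0 < z.re} := by
  intro z₀ (hz₀ : 0 < z₀.re)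
  set ε := z₀.re / 2 with hε
  have hre (w : ℂ) (hw : w ∈ Metric.ball z₀ ε) : ε < w.re := by
    have := (abs_le.1 (Complex.abs_re_le_norm (w - z₀))).1
    rw [Complex.sub_re] at this
    linarith [mem_ball_iff_norm.1 hw, hε]
  have hbound : ∀ᵐ x : ℝ, ∀ w ∈ Metric.ball z₀ ε,
      ‖-(x : ℂ) ^ 4 * cexp (-w * x ^ 4)‖ ≤ x ^ 4 * rexp (-ε * x ^ 4) := by
    refine ae_of_all _ fun x w hw => ?_
    rw [norm_mul, norm_cexp_neg_mul_pow_four, norm_neg, ← Complex.ofReal_pow, Complex.norm_real,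
      Real.norm_of_nonneg (by positivity)]
    gcongr
    exact (hre w hw).le
  have hderiv : ∀ᵐ x : ℝ, ∀ w ∈ Metric.ball z₀ ε,
      HasDerivAt (fun w => cexp (-w * x ^ 4)) (-(x : ℂ) ^ 4 * cexp (-w * x ^ 4)) w :=
    ae_of_all _ fun x w _ => by
      simpa [mul_comm] using ((hasDerivAt_id w).neg.mul_const ((x : ℂ) ^ 4)).cexp
  exact (hasDerivAt_integral_of_dominated_loc_of_deriv_le
    (Metric.ball_mem_nhds z₀ (half_pos hz₀)) (Eventually.of_forall fun w => by fun_prop)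
    (integrable_cexp_neg_mul_pow_four hz₀) (by fun_prop) hbound
    (integrable_pow_mul_exp_neg_mul_pow_four 4 (half_pos hz₀)) hderiv
    ).2.differentiableAt.differentiableWithinAt

theorem integral_cexp_neg_mul_pow_four {z : ℂ} (hz : 0 < z.re) :
    ∫ x : ℝ, cexp (-z * x ^ 4) =
      (2 * Real.Gamma (5 / 4) : ℝ) * z ^ ((-1 / 4 : ℝ) : ℂ) := by
  set U : Set ℂ := {z | 0 < z.re}
  have hU : IsOpen U := isOpen_lt continuous_const Complex.continuous_re
  have hrhs : DifferentiableOn ℂ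
      (fun z : ℂ => ((2 * Real.Gamma (5 / 4) : ℝ) : ℂ) * z ^ ((-1 / 4 : ℝ) : ℂ)) U :=
    fun w (hw : 0 < w.re) =>
      ((differentiableAt_id.cpow_const (Or.inl hw)).const_mul _).differentiableWithinAt
  have hreal (b : ℝ) (hb : 0 < b) : ∫ x : ℝ, cexp (-b * x ^ 4) =
      ((2 * Real.Gamma (5 / 4) : ℝ) : ℂ) * (b : ℂ) ^ ((-1 / 4 : ℝ) : ℂ) := by
    rw [← Complex.ofReal_cpow hb.le, ← Complex.ofReal_mul, ← integral_exp_neg_mul_pow_four hb,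
      ← integral_complex_ofReal]
    push_cast
    rfl
  have hfreq : ∃ᶠ w in 𝓝[≠] (1 : ℂ), ∫ x : ℝ, cexp (-w * x ^ 4) =
      ((2 * Real.Gamma (5 / 4) : ℝ) : ℂ) * w ^ ((-1 / 4 : ℝ) : ℂ) := by
    have hmaps : Tendsto (fun b : ℝ => (b : ℂ)) (𝓝[≠] 1) (𝓝[≠] 1) :=
      Complex.continuous_ofReal.continuousWithinAt.tendsto_nhdsWithin
        fun b (hb : b ≠ 1) => by simpa using hb
    refine hmaps.frequently (Eventually.frequently ?_)
    filter_upwards [nhdsWithin_le_nhds (lt_mem_nhds one_pos)] with b hb using hreal b hb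
  exact (differentiableOn_integral_cexp_neg_mul_pow_four.analyticOnNhd hU
    ).eqOn_of_preconnected_of_frequently_eq (hrhs.analyticOnNhd hU)
    (convex_halfSpace_re_gt 0).isPreconnected (by simp) hfreq hz

theorem Complex.re_cpow_ofReal_pos {z : ℂ} (hz : 0 < z.re) {s : ℝ} (hs : |s| ≤ 1) :
    0 < (z ^ (s : ℂ)).re := by
  have hz0 : z ≠ 0 := by rintro rfl; simp at hz
  rw [Complex.cpow_ofReal_re]
  refine mul_pos (Real.rpow_pos_of_pos (norm_pos_iff.2 hz0) _) (Real.cos_pos_of_mem_Ioo ?_)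
  have harg := Complex.abs_arg_lt_pi_div_two_iff.2 (Or.inl hz)
  refine abs_lt.1 ?_
  calc |z.arg * s| = |z.arg| * |s| := abs_mul _ _
    _ ≤ |z.arg| := mul_le_of_le_one_right (abs_nonneg _) hs
    _ < π / 2 := harg

theorem re_integral_cexp_neg_mul_pow_four_pos {z : ℂ} (hz : 0 < z.re) :
    0 < (∫ x : ℝ, cexp (-z * x ^ 4)).re := by
  rw [integral_cexp_neg_mul_pow_four hz, Complex.re_ofReal_mul]
  have := Real.Gamma_pos_of_pos (by norm_num : (0 : ℝ) < 5 / 4)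
  exact mul_pos (by positivity) (Complex.re_cpow_ofReal_pos hz (by norm_num [abs_div]))

theorem quarticMixtureKernel_smul_cexp (w : ℂ) (x n : ℝ) :
    quarticMixtureKernel x n • cexp (-w * x ^ 4) =
      ((2 * π)⁻¹ * rexp (-(n ^ 2 / 2))) • cexp (-(w + ((8 * n ^ 2)⁻¹ : ℝ)) * x ^ 4) := by
  rw [quarticMixtureKernel, sub_eq_add_neg, Real.exp_add, ← mul_assoc, mul_smul]
  congr 1
  rw [Complex.real_smul, Complex.ofReal_exp, ← Complex.exp_add]
  congr 1
  push_cast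
  ring

theorem re_integral_cexp_neg_mul_pow_four_gaussianReal_pos {w : ℂ} (hw : 0 ≤ w.re) :
    0 < (∫ x, cexp (-w * x ^ 4) ∂gaussianReal 0 1).re := by
  have hint : Integrable (fun x : ℝ => cexp (-w * x ^ 4)) (gaussianReal 0 1) :=
    .of_bound (by fun_prop) 1 <| ae_of_all _ fun x => by
      rw [norm_cexp_neg_mul_pow_four, Real.exp_le_one_iff, neg_mul, neg_nonpos]
      positivity
  have hG_int : Integrable fun n => ∫ x, quarticMixtureKernel x n • cexp (-w * x ^ 4) :=
    (integrable_quarticMixtureKernel_smul hint).integral_prod_right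
  have hG_pos (n : ℝ) (hn : n ≠ 0) :
      0 < (∫ x, quarticMixtureKernel x n • cexp (-w * x ^ 4)).re := by
    simp_rw [quarticMixtureKernel_smul_cexp, integral_smul, Complex.smul_re]
    refine mul_pos (by positivity) (re_integral_cexp_neg_mul_pow_four_pos ?_)
    rw [Complex.add_re, Complex.ofReal_re]
    positivity
  rw [integral_gaussianReal_eq_integral_integral_quarticMixtureKernel_smul hint,
    ← RCLike.re_to_complex, ← integral_re hG_int]
  exact integral_pos_of_ae_pos hG_int.re <| by
    filter_upwards [Measure.ae_ne volume 0] with n hn using hG_pos n hn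

theorem gaussianNu_eq_gaussianReal : gaussianNu = gaussianReal 0 1 := by
  rw [gaussianReal_of_var_ne_zero 0 one_ne_zero, gaussianNu]
  congr with x
  simp [gaussianPDF, gaussianPDFReal]

/-- The zero-dimensional φ⁴ partition function `Z(λ) = ∫ e^{−λx⁴/8} dν(x)` has strictly
positive real part on the closed right half-plane `Re λ ≥ 0`; in particular `Z(λ) ≠ 0`
there, so the principal logarithm `F(λ) = Log Z(λ)` is well defined. -/
theorem partition_function_positive_real_part (lam : ℂ) (hlam : 0 ≤ lam.re) :
    0 < (∫ x : ℝ, Complex.exp (-lam * (x : ℂ) ^ 4 / 8) ∂gaussianNu).re := by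
  have hlam8 : 0 ≤ (lam / 8).re := by
    rw [Complex.div_ofNat_re]
    positivity
  rw [gaussianNu_eq_gaussianReal]
  convert re_integral_cexp_neg_mul_pow_four_gaussianReal_pos hlam8 using 5 with x
  ring
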